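/- If û is a solution of the Fourier-space equation for the parameter ξ with û(0) = û₀ and û'(0) = û₁, then for all t ≥ 0: |û'(t)|² + (1/4) log²(1 + |ξ|²)|û(t)|² + (π²/4)|û(t)|² ≤ (9/2) (|û₁|² + (1/4) log²(1 + |ξ|²)|û₀|² + (π²/4)|û₀|²) e^{-φ(ξ) t}. -/

import Mathlib

/-!
The equation is the damped oscillator `u'' + a u' + ω u = 0` with `ω = (a² + π²) / 4`, and `ℂ` is
a real inner product space. Its energy `E = ‖u'‖² + ω ‖u‖²` differs from the Lyapunov function
`L = E + κ ⟪u, u'⟫_ℝ` by at most `E / 2` once `κ² ≤ ω`. Along solutions `L' + μ L` is minus a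
quadratic form in `(u, u')` whose discriminant is nonpositive for `κ = min a (4/3)` and
`μ = 2κ/3 = φ(ξ)`, so `L(t) ≤ L(0) e^{-μt}`, whence `E(t) ≤ 3 E(0) e^{-μt}`.
-/

/-- The weight function φ from the paper. -/
noncomputable def phi {N : ℕ} (ξ : EuclideanSpace ℝ (Fin N)) : ℝ :=
  if ‖ξ‖ ≤ Real.sqrt (Real.exp (4 / 3 : ℝ) - 1) then
    (2 / 3) * Real.log (1 + ‖ξ‖ ^ 2)
  else
    8 / 9

open Real InnerProductSpace

lemma mul_mul_le_of_sq_le_four_mul_mul {A B C : ℝ} (hA : 0 ≤ A) (hB : 0 ≤ B)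
    (h : C ^ 2 ≤ 4 * A * B) (x y : ℝ) : C * x * y ≤ A * x ^ 2 + B * y ^ 2 := by
  rcases hA.eq_or_lt with rfl | hA
  · obtain rfl : C = 0 := by nlinarith [sq_nonneg C]
    nlinarith [sq_nonneg y]
  · nlinarith [sq_nonneg (2 * A * x - C * y), mul_nonneg hA.le (sq_nonneg y)]

lemma le_mul_exp_neg_of_hasDerivAt_add_mul_nonpos {f f' : ℝ → ℝ} {μ : ℝ}
    (hf : ∀ t, HasDerivAt f (f' t) t) (hle : ∀ t, 0 ≤ t → f' t + μ * f t ≤ 0)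
    {t : ℝ} (ht : 0 ≤ t) : f t ≤ f 0 * exp (-μ * t) := by
  have hg (s : ℝ) :
      HasDerivAt (fun s => f s * exp (μ * s)) ((f' s + μ * f s) * exp (μ * s)) s :=
    ((hf s).mul (((hasDerivAt_id' s).const_mul μ).exp)).congr_deriv (by ring)
  have hanti : AntitoneOn (fun s => f s * exp (μ * s)) (Set.Ici 0) := by
    refine antitoneOn_of_hasDerivWithinAt_nonpos (convex_Ici 0)
      (fun s _ => (hg s).continuousAt.continuousWithinAt) (fun s _ => (hg s).hasDerivWithinAt)
      fun s hs => ?_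
    rw [interior_Ici] at hs
    exact mul_nonpos_of_nonpos_of_nonneg (hle s (le_of_lt hs)) (exp_pos _).le
  have hmono : f t * exp (μ * t) ≤ f 0 * exp (μ * 0) := hanti Set.self_mem_Ici ht ht
  rw [mul_zero, exp_zero, mul_one] at hmono
  calc f t = f t * exp (μ * t) * exp (-μ * t) := by
        rw [mul_assoc, ← exp_add, neg_mul, add_neg_cancel, exp_zero, mul_one]
    _ ≤ f 0 * exp (-μ * t) := by gcongr

section DampedOscillator

variable {E : Type*} [NormedAddCommGroup E] [InnerProductSpace ℝ E]

def oscillatorEnergy (ω : ℝ) (x v : E) : ℝ := ‖v‖ ^ 2 + ω * ‖x‖ ^ 2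

def dampedLyapunov (ω κ : ℝ) (x v : E) : ℝ := oscillatorEnergy ω x v + κ * ⟪x, v⟫_ℝ

lemma abs_dampedLyapunov_sub_oscillatorEnergy_le {ω κ : ℝ} (hκω : κ ^ 2 ≤ ω) (x v : E) :
    |dampedLyapunov ω κ x v - oscillatorEnergy ω x v| ≤ oscillatorEnergy ω x v / 2 := by
  have hinner : |κ * ⟪x, v⟫_ℝ| ≤ |κ| * (‖x‖ * ‖v‖) := by
    rw [abs_mul]; exact mul_le_mul_of_nonneg_left (abs_real_inner_le_norm x v) (abs_nonneg κ)
  have hκx : |κ| ^ 2 * ‖x‖ ^ 2 ≤ ω * ‖x‖ ^ 2 := by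
    rw [sq_abs]; exact mul_le_mul_of_nonneg_right hκω (sq_nonneg _)
  simp only [dampedLyapunov, oscillatorEnergy, add_sub_cancel_left]
  nlinarith [sq_nonneg (|κ| * ‖x‖ - ‖v‖)]

lemma dampedLyapunov_deriv_add_mul_nonpos {a ω κ μ : ℝ} (hμκ : μ ≤ κ)
    (hκμa : κ + μ ≤ 2 * a) (hω : 0 ≤ ω)
    (hdisc : (κ * (a - μ)) ^ 2 ≤ 4 * (2 * a - κ - μ) * ((κ - μ) * ω))
    {x v w : E} (hw : w = -(ω • x) - a • v) :
    2 * ⟪v, w⟫_ℝ + ω * (2 * ⟪x, v⟫_ℝ) + κ * (⟪x, w⟫_ℝ + ⟪v, v⟫_ℝ)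
      + μ * dampedLyapunov ω κ x v ≤ 0 := by
  have hcross : -(κ * (a - μ) * ⟪x, v⟫_ℝ) ≤ |κ * (a - μ)| * ‖v‖ * ‖x‖ :=
    calc -(κ * (a - μ) * ⟪x, v⟫_ℝ) ≤ |κ * (a - μ)| * |⟪x, v⟫_ℝ| :=
          (neg_le_abs _).trans_eq (abs_mul _ _)
      _ ≤ |κ * (a - μ)| * (‖x‖ * ‖v‖) := by gcongr; exact abs_real_inner_le_norm x v
      _ = |κ * (a - μ)| * ‖v‖ * ‖x‖ := by ring
  have hquad := mul_mul_le_of_sq_le_four_mul_mul (by linarith)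
    (mul_nonneg (by linarith) hω) ((sq_abs _).trans_le hdisc) ‖v‖ ‖x‖
  simp only [hw, dampedLyapunov, oscillatorEnergy, inner_sub_right, inner_neg_right,
    inner_smul_right, real_inner_self_eq_norm_sq, real_inner_comm x v]
  linarith

lemma hasDerivAt_dampedLyapunov {ω κ : ℝ} {p p' : ℝ → E} {x' v' : E} {t : ℝ}
    (hp : HasDerivAt p x' t) (hp' : HasDerivAt p' v' t) :
    HasDerivAt (fun s => dampedLyapunov ω κ (p s) (p' s))
      (2 * ⟪p' t, v'⟫_ℝ + ω * (2 * ⟪p t, x'⟫_ℝ) + κ * (⟪p t, v'⟫_ℝ + ⟪x', p' t⟫_ℝ)) t :=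
  ((hp'.norm_sq.add (hp.norm_sq.const_mul ω)).add ((hp.inner ℝ hp').const_mul κ))

theorem oscillatorEnergy_le_of_damped {a ω κ μ : ℝ} (hμκ : μ ≤ κ)
    (hκμa : κ + μ ≤ 2 * a) (hκω : κ ^ 2 ≤ ω)
    (hdisc : (κ * (a - μ)) ^ 2 ≤ 4 * (2 * a - κ - μ) * ((κ - μ) * ω))
    {p p' p'' : ℝ → E} (hp : ∀ t, HasDerivAt p (p' t) t)
    (hp' : ∀ t, HasDerivAt p' (p'' t) t) (heq : ∀ t, 0 ≤ t → p'' t = -(ω • p t) - a • p' t)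
    {t : ℝ} (ht : 0 ≤ t) :
    oscillatorEnergy ω (p t) (p' t) ≤ 3 * oscillatorEnergy ω (p 0) (p' 0) * exp (-μ * t) := by
  have hω : 0 ≤ ω := (sq_nonneg κ).trans hκω
  have hdecay := le_mul_exp_neg_of_hasDerivAt_add_mul_nonpos
    (fun s => hasDerivAt_dampedLyapunov (ω := ω) (κ := κ) (hp s) (hp' s))
    (fun s hs => dampedLyapunov_deriv_add_mul_nonpos hμκ hκμa hω hdisc (heq s hs)) ht
  have hLt := abs_le.mp (abs_dampedLyapunov_sub_oscillatorEnergy_le hκω (p t) (p' t))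
  have hL0 := abs_le.mp (abs_dampedLyapunov_sub_oscillatorEnergy_le hκω (p 0) (p' 0))
  calc oscillatorEnergy ω (p t) (p' t) ≤ 2 * dampedLyapunov ω κ (p t) (p' t) := by linarith
    _ ≤ 2 * (dampedLyapunov ω κ (p 0) (p' 0) * exp (-μ * t)) := by gcongr
    _ ≤ 2 * (3 / 2 * oscillatorEnergy ω (p 0) (p' 0) * exp (-μ * t)) := by gcongr; linarith
    _ = 3 * oscillatorEnergy ω (p 0) (p' 0) * exp (-μ * t) := by ring

end DampedOscillator

lemma phi_eq_mul_min {N : ℕ} (ξ : EuclideanSpace ℝ (Fin N)) :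
    phi ξ = 2 / 3 * min (log (1 + ‖ξ‖ ^ 2)) (4 / 3) := by
  have hcond : ‖ξ‖ ≤ √(exp (4 / 3) - 1) ↔ log (1 + ‖ξ‖ ^ 2) ≤ 4 / 3 := by
    rw [le_sqrt (norm_nonneg ξ) (by linarith [add_one_le_exp (4 / 3 : ℝ)]),
      log_le_iff_le_exp (by positivity)]
    constructor <;> intro h <;> linarith
  unfold phi
  split_ifs with h
  · rw [min_eq_left (hcond.mp h)]
  · rw [min_eq_right (le_of_not_ge (mt hcond.mpr h))]
    norm_num

lemma sq_min_le_add_pi_sq {a : ℝ} (ha : 0 ≤ a) :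
    min a (4 / 3) ^ 2 ≤ a ^ 2 / 4 + π ^ 2 / 4 := by
  have := pi_gt_three
  rcases le_total a (4 / 3) with h | h
  · rw [min_eq_left h]; nlinarith
  · rw [min_eq_right h]; nlinarith

lemma min_four_thirds_discriminant_le (a : ℝ) :
    (min a (4 / 3) * (a - 2 / 3 * min a (4 / 3))) ^ 2 ≤
      4 * (2 * a - min a (4 / 3) - 2 / 3 * min a (4 / 3))
        * ((min a (4 / 3) - 2 / 3 * min a (4 / 3)) * (a ^ 2 / 4 + π ^ 2 / 4)) := by
  have := pi_gt_three
  rcases le_total a (4 / 3) with h | h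
  · rw [min_eq_left h]
    nlinarith [sq_nonneg a, sq_nonneg π, sq_nonneg (a * π)]
  · rw [min_eq_right h]
    nlinarith [mul_nonneg (mul_nonneg (sub_nonneg.2 h) (sub_nonneg.2 h)) (sub_nonneg.2 h),
      sq_nonneg (a - 4 / 3), sq_nonneg π]

theorem stmt_8_general (N : ℕ) (ξ : EuclideanSpace ℝ (Fin N))
    (a : ℝ) (ha : a = Real.log (1 + ‖ξ‖ ^ 2))
    (u u' u'' : ℝ → ℂ) (u₀ u₁ : ℂ)
    (hu : ∀ t : ℝ, HasDerivAt u (u' t) t)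
    (hu' : ∀ t : ℝ, HasDerivAt u' (u'' t) t)
    (heq : ∀ t : ℝ, 0 ≤ t →
      u'' t + ((a ^ 2 / 4 : ℝ) : ℂ) * u t + ((Real.pi ^ 2 / 4 : ℝ) : ℂ) * u t
        + (a : ℂ) * u' t = 0)
    (h₀ : u 0 = u₀) (h₁ : u' 0 = u₁) :
    ∀ t : ℝ, 0 ≤ t →
      ‖u' t‖ ^ 2 + (1 / 4) * a ^ 2 * ‖u t‖ ^ 2 + (Real.pi ^ 2 / 4) * ‖u t‖ ^ 2 ≤
        (9 / 2) * (‖u₁‖ ^ 2 + (1 / 4) * a ^ 2 * ‖u₀‖ ^ 2 + (Real.pi ^ 2 / 4) * ‖u₀‖ ^ 2)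
          * Real.exp (-(phi ξ) * t) := by
  intro t ht
  have ha0 : 0 ≤ a := ha ▸ log_nonneg (by nlinarith [sq_nonneg ‖ξ‖])
  set κ := min a (4 / 3)
  set ω := a ^ 2 / 4 + π ^ 2 / 4 with hω
  have hκ0 : 0 ≤ κ := le_min ha0 (by norm_num)
  have hκa : κ ≤ a := min_le_left a (4 / 3)
  have heq' (s : ℝ) (hs : 0 ≤ s) : u'' s = -(ω • u s) - a • u' s := by
    simp only [hω, Complex.real_smul, Complex.ofReal_add]
    linear_combination heq s hs
  have hdecay := oscillatorEnergy_le_of_damped (by linarith) (by linarith)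
    (sq_min_le_add_pi_sq ha0) (min_four_thirds_discriminant_le a) hu hu' heq' ht
  rw [h₀, h₁] at hdecay
  have hE0 : 0 ≤ oscillatorEnergy ω u₀ u₁ := by unfold oscillatorEnergy; positivity
  rw [phi_eq_mul_min, ← ha]
  calc _ = oscillatorEnergy ω (u t) (u' t) := by unfold oscillatorEnergy; ring
    _ ≤ 3 * oscillatorEnergy ω u₀ u₁ * exp (-(2 / 3 * κ) * t) := hdecay
    _ ≤ 9 / 2 * oscillatorEnergy ω u₀ u₁ * exp (-(2 / 3 * κ) * t) := by gcongr; norm_num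
    _ = _ := by unfold oscillatorEnergy; ring

/-- Pointwise exponential decay of the natural energy in the Fourier space. -/
theorem stmt_8 (N : ℕ) (hN : 1 ≤ N) (ξ : EuclideanSpace ℝ (Fin N))
    (a : ℝ) (ha : a = Real.log (1 + ‖ξ‖ ^ 2))
    (u u' u'' : ℝ → ℂ) (u₀ u₁ : ℂ)
    (hu : ∀ t : ℝ, HasDerivAt u (u' t) t)
    (hu' : ∀ t : ℝ, HasDerivAt u' (u'' t) t)
    (heq : ∀ t : ℝ, 0 ≤ t →
      u'' t + ((a ^ 2 / 4 : ℝ) : ℂ) * u t + ((Real.pi ^ 2 / 4 : ℝ) : ℂ) * u t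
        + (a : ℂ) * u' t = 0)
    (h₀ : u 0 = u₀) (h₁ : u' 0 = u₁) :
    ∀ t : ℝ, 0 ≤ t →
      ‖u' t‖ ^ 2 + (1 / 4) * a ^ 2 * ‖u t‖ ^ 2 + (Real.pi ^ 2 / 4) * ‖u t‖ ^ 2 ≤
        (9 / 2) * (‖u₁‖ ^ 2 + (1 / 4) * a ^ 2 * ‖u₀‖ ^ 2 + (Real.pi ^ 2 / 4) * ‖u₀‖ ^ 2)
          * Real.exp (-(phi ξ) * t) :=
  stmt_8_general N ξ a ha u u' u'' u₀ u₁ hu hu' heq h₀ h₁
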